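/- Let K be a field equipped with a nonarchimedean (rank-one) multiplicative absolute value ‖·‖ : K → ℝ≥0 which is complete for the induced metric, and let L ⊆ K be a subfield which is algebraically closed (as an abstract field). Then the topological closure of L in K is again an algebraically closed subfield of K. -/

import Mathlib

/-!
The closure `M` of `L` is a complete ultrametric field in which the algebraically closed field
`L` is dense. Approximate a monic `f` of degree `n ≥ 1` over `M` by monic `g` over `L`, which
split. On a ball of radius `R ≥ 1` the ultrametric inequality bounds `‖g(z) - f(z)‖` by the
largest coefficient distance times `Rⁿ`, and `‖g(x)‖ = ∏ ‖x - b‖` over the roots `b` of `g`, so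
some root satisfies `‖x - b‖ⁿ ≤ ‖g(x)‖ ≤ max ‖f(x)‖ ‖g(x) - f(x)‖`. Iterating with ever better
approximations gives a geometrically convergent sequence along which `f` tends to `0`; its limit
is a root of `f`.
-/

open Polynomial Filter Topology

theorem Polynomial.norm_eval_le_of_forall_norm_coeff_le {F : Type*} [NormedField F]
    [IsUltrametricDist F] {p : F[X]} {n : ℕ} (hp : p.natDegree ≤ n) {δ R : ℝ}
    (hδ : 0 ≤ δ) (hR : 1 ≤ R) (hcoeff : ∀ i, ‖p.coeff i‖ ≤ δ) {z : F} (hz : ‖z‖ ≤ R) :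
    ‖p.eval z‖ ≤ δ * R ^ n := by
  rw [eval_eq_sum_range' (Nat.lt_succ_of_le hp)]
  refine IsUltrametricDist.norm_sum_le_of_forall_le_of_nonneg (by positivity) fun i hi ↦ ?_
  rw [norm_mul, norm_pow]
  gcongr
  · exact hcoeff i
  · calc ‖z‖ ^ i ≤ R ^ i := by gcongr
      _ ≤ R ^ n := pow_le_pow_right₀ hR (Nat.lt_succ_iff.mp (Finset.mem_range.mp hi))

theorem Polynomial.Splits.exists_mem_roots_norm_sub_pow_le {F : Type*} [NormedField F]
    {g : F[X]} (hg : g.Splits) (hm : g.Monic) (hdeg : g.natDegree ≠ 0) (a : F) :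
    ∃ b ∈ g.roots, ‖a - b‖ ^ g.natDegree ≤ ‖g.eval a‖ := by
  have hroots : g.roots ≠ 0 :=
    Multiset.card_pos.mp (hg.natDegree_eq_card_roots ▸ Nat.pos_of_ne_zero hdeg)
  obtain ⟨b, hb, hmin⟩ := Multiset.exists_min_image (fun z ↦ ‖a - z‖) hroots
  refine ⟨b, hb, ?_⟩
  have hnorm := map_multiset_prod (normHom : F →*₀ ℝ) (g.roots.map (a - ·))
  simp only [normHom_apply, Multiset.map_map, Function.comp_def] at hnorm
  have hle := Multiset.prod_map_le_prod_map₀ (fun _ ↦ ‖a - b‖) (fun z ↦ ‖a - z‖)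
    (fun _ _ ↦ norm_nonneg _) hmin
  rwa [Multiset.map_const', Multiset.prod_replicate, ← hg.natDegree_eq_card_roots,
    ← hnorm, ← hg.eval_eq_prod_roots_of_monic hm] at hle

section DenseAlgClosed

variable {K F : Type*} [Field K] [NormedField F] [IsUltrametricDist F] [Algebra K F]
  [IsAlgClosed K]

theorem exists_norm_sub_le_and_norm_eval_le (hd : DenseRange (algebraMap K F)) {f : F[X]}
    (hf : f.Monic) (hn : f.natDegree ≠ 0) {R r s : ℝ} (hR : 1 ≤ R) (hrR : r ≤ R) (hs : 0 < s)
    (hsr : s ≤ r) {x : F} (hx : ‖x‖ ≤ R) (hfx : ‖f.eval x‖ ≤ r ^ f.natDegree) :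
    ∃ y : F, ‖y‖ ≤ R ∧ ‖x - y‖ ≤ r ∧ ‖f.eval y‖ ≤ s ^ f.natDegree := by
  set n := f.natDegree
  obtain ⟨g, hgm, hdeg, hcoeff⟩ :=
    exists_monic_and_natDegree_eq_and_norm_map_algebraMap_coeff_sub_lt hd hf
      (ε := s ^ n / R ^ n) (by positivity)
  set g' := g.map (algebraMap K F)
  have hg'deg : g'.natDegree = n := by rw [hgm.natDegree_map, ← hdeg]
  have hclose : ∀ z : F, ‖z‖ ≤ R → ‖g'.eval z - f.eval z‖ ≤ s ^ n := fun z hz ↦ by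
    rw [← eval_sub]
    calc ‖(g' - f).eval z‖ ≤ s ^ n / R ^ n * R ^ n :=
          norm_eval_le_of_forall_norm_coeff_le ((natDegree_sub_le _ _).trans (by omega))
            (by positivity) hR (fun i ↦ by simpa using (hcoeff i).le) hz
      _ = s ^ n := div_mul_cancel₀ _ (by positivity)
  obtain ⟨y, hy, hxy⟩ :=
    ((IsAlgClosed.splits g).map (algebraMap K F)).exists_mem_roots_norm_sub_pow_le
      (hgm.map _) (hg'deg ▸ hn) x
  rw [hg'deg] at hxy
  have hxy_le : ‖x - y‖ ≤ r := by
    refine (pow_le_pow_iff_left₀ (norm_nonneg _) (hs.le.trans hsr) hn).1 (hxy.trans ?_)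
    calc ‖g'.eval x‖ = ‖f.eval x + (g'.eval x - f.eval x)‖ := by rw [add_sub_cancel]
      _ ≤ max ‖f.eval x‖ ‖g'.eval x - f.eval x‖ := IsUltrametricDist.norm_add_le_max _ _
      _ ≤ r ^ n := max_le hfx ((hclose x hx).trans (pow_le_pow_left₀ hs.le hsr n))
  have hy_le : ‖y‖ ≤ R := by
    calc ‖y‖ = ‖x + (y - x)‖ := by rw [add_sub_cancel]
      _ ≤ max ‖x‖ ‖y - x‖ := IsUltrametricDist.norm_add_le_max _ _
      _ ≤ R := max_le hx (norm_sub_rev y x ▸ hxy_le.trans hrR)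
  have hgy : g'.eval y = 0 := (mem_roots'.mp hy).2
  exact ⟨y, hy_le, hxy_le, by simpa [hgy] using hclose y hy_le⟩

theorem exists_seq_norm_sub_le_and_norm_eval_le (hd : DenseRange (algebraMap K F)) {f : F[X]}
    (hf : f.Monic) (hn : f.natDegree ≠ 0) :
    ∃ R : ℝ, ∃ u : ℕ → F, (∀ k, ‖u k - u (k + 1)‖ ≤ R * 2⁻¹ ^ k) ∧
      ∀ k, ‖f.eval (u k)‖ ≤ (R * 2⁻¹ ^ k) ^ f.natDegree := by
  set R := max 1 ‖f.eval 0‖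
  have hR : 1 ≤ R := le_max_left _ _
  have hradii : ∀ k, 0 < R * 2⁻¹ ^ (k + 1) ∧ R * 2⁻¹ ^ (k + 1) ≤ R * 2⁻¹ ^ k ∧
      R * 2⁻¹ ^ k ≤ R := fun k ↦ by
    refine ⟨by positivity, ?_, ?_⟩
    · exact mul_le_mul_of_nonneg_left
        (pow_le_pow_of_le_one (by norm_num) (by norm_num) k.le_succ) (by positivity)
    · exact mul_le_of_le_one_right (by positivity) (pow_le_one₀ (by norm_num) (by norm_num))
  have step : ∀ k (x : F), ‖x‖ ≤ R ∧ ‖f.eval x‖ ≤ (R * 2⁻¹ ^ k) ^ f.natDegree →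
      ∃ y : F, (‖y‖ ≤ R ∧ ‖f.eval y‖ ≤ (R * 2⁻¹ ^ (k + 1)) ^ f.natDegree) ∧
        ‖x - y‖ ≤ R * 2⁻¹ ^ k := fun k x ⟨hx, hfx⟩ ↦ by
    obtain ⟨hs, hsr, hrR⟩ := hradii k
    obtain ⟨y, hy, hxy, hfy⟩ :=
      exists_norm_sub_le_and_norm_eval_le hd hf hn hR hrR hs hsr hx hfx
    exact ⟨y, ⟨hy, hfy⟩, hxy⟩
  choose! next hnext using step
  let u : ℕ → F := fun k ↦ Nat.rec 0 next k
  have hu : ∀ k, ‖u k‖ ≤ R ∧ ‖f.eval (u k)‖ ≤ (R * 2⁻¹ ^ k) ^ f.natDegree := by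
    intro k
    induction k with
    | zero =>
      exact ⟨by simpa [u] using zero_le_one.trans hR,
        by simpa [u] using (le_max_right 1 _).trans (le_self_pow₀ hR hn)⟩
    | succ k ih => exact (hnext k (u k) ih).1
  exact ⟨R, u, fun k ↦ (hnext k (u k) (hu k)).2, fun k ↦ (hu k).2⟩

theorem IsAlgClosed.of_denseRange_of_isUltrametricDist [CompleteSpace F]
    (hd : DenseRange (algebraMap K F)) : IsAlgClosed F := by
  refine IsAlgClosed.of_exists_root F fun f hf hirr ↦ ?_
  have hn : f.natDegree ≠ 0 := hirr.natDegree_pos.ne'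
  obtain ⟨R, u, hdist, heval⟩ := exists_seq_norm_sub_le_and_norm_eval_le hd hf hn
  have hcauchy : CauchySeq u := cauchySeq_of_le_geometric 2⁻¹ R (by norm_num) fun k ↦
    (dist_eq_norm _ _).trans_le (hdist k)
  obtain ⟨ℓ, hℓ⟩ := cauchySeq_tendsto_of_complete hcauchy
  have hbound : Tendsto (fun k : ℕ ↦ (R * 2⁻¹ ^ k) ^ f.natDegree) atTop (𝓝 0) := by
    have hgeom :=
      tendsto_pow_atTop_nhds_zero_of_lt_one (by norm_num) (by norm_num : (2⁻¹ : ℝ) < 1)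
    simpa [hn] using (hgeom.const_mul R).pow f.natDegree
  have hzero : Tendsto (fun k ↦ f.eval (u k)) atTop (𝓝 0) :=
    tendsto_zero_iff_norm_tendsto_zero.mpr (squeeze_zero (fun _ ↦ norm_nonneg _) heval hbound)
  exact ⟨ℓ, tendsto_nhds_unique ((f.continuous.tendsto ℓ).comp hℓ) hzero⟩

end DenseAlgClosed

/-- Let `K` be a field with a nonarchimedean (rank-one) multiplicative absolute
value, complete for the induced metric (formalized as a complete `NormedField`
whose norm is nonarchimedean), and let `L ⊆ K` be a subfield which is
algebraically closed as an abstract field.  Then the topological closure of `L`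
in `K` is again an algebraically closed subfield of `K`. -/
theorem isAlgClosed_topologicalClosure_of_isAlgClosed_subfield
    (K : Type*) [NormedField K] [CompleteSpace K]
    (hna : IsNonarchimedean (norm : K → ℝ))
    (L : Subfield K) (hL : IsAlgClosed L) :
    IsAlgClosed L.topologicalClosure := by
  have : IsUltrametricDist K := .isUltrametricDist_of_isNonarchimedean_norm hna
  have : CompleteSpace L.topologicalClosure := L.isClosed_topologicalClosure.completeSpace_coe
  let : Algebra L L.topologicalClosure := (Subfield.inclusion L.le_topologicalClosure).toAlgebra
  exact IsAlgClosed.of_denseRange_of_isUltrametricDist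
    ((denseRange_inclusion_iff L.le_topologicalClosure).mpr subset_rfl)
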